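/- Let r > 0 be real. The set Λ = {2·(a₀·𝟏 + a₁·𝐢 + a₂·𝐣 + a₃·𝐤)·v : a₀, a₁, a₂, a₃ ∈ ℤ with a₀ + a₁ + a₂ + a₃ even} is a lattice in ℂ²: it is an additive subgroup of ℂ², it is a discrete subset of ℂ², and it spans ℂ² as a real vector space (so it is a discrete abelian subgroup of rank 4). -/

import Mathlib

open Matrix Complex

/-- The quaternionic `2×2` matrices `𝟏, 𝐢, 𝐣, 𝐤`. -/
noncomputable def q1 : Matrix (Fin 2) (Fin 2) ℂ := !![1, 0; 0, 1]
noncomputable def qi : Matrix (Fin 2) (Fin 2) ℂ := !![0, 1; -1, 0]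
noncomputable def qj : Matrix (Fin 2) (Fin 2) ℂ := !![0, -Complex.I; -Complex.I, 0]
noncomputable def qk : Matrix (Fin 2) (Fin 2) ℂ := !![-Complex.I, 0; 0, Complex.I]

/-- The vector `v = (0, r) ∈ ℂ²`. -/
noncomputable def vvec (r : ℝ) : Fin 2 → ℂ := ![0, (r : ℂ)]

/-- The set `Λ = {2(a₀𝟏 + a₁𝐢 + a₂𝐣 + a₃𝐤)v : aᵢ ∈ ℤ, a₀+a₁+a₂+a₃ even}`. -/
def Λset (r : ℝ) : Set (Fin 2 → ℂ) :=
  {x | ∃ a₀ a₁ a₂ a₃ : ℤ, Even (a₀ + a₁ + a₂ + a₃) ∧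
    x = (2:ℂ) • ((a₀ • q1 + a₁ • qi + a₂ • qj + a₃ • qk) *ᵥ vvec r)}

/-! Multiplying out, `2(a₀𝟏 + a₁𝐢 + a₂𝐣 + a₃𝐤)v = 2r(a₁ - a₂i, a₀ + a₃i)`, so `Λ` is a subgroup of
`2r·ℤ[i]²`, whose nonzero vectors have sup norm at least `2r`; hence balls of radius `2r` isolate
its points. Taking a single coefficient equal to `±2` shows that `Λ` contains `4r` times each
vector of the real basis `e₁, i e₁, e₂, i e₂` of `ℂ²`. -/

theorem Submodule.span_eq_top_of_smul_basis_mem {ι K V : Type*} [Field K] [AddCommGroup V]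
    [Module K V] (b : Module.Basis ι K V) {c : K} (hc : c ≠ 0) {s : Set V}
    (hs : ∀ i, c • b i ∈ s) : Submodule.span K s = ⊤ := by
  refine eq_top_iff.2 (b.span_eq ▸ Submodule.span_le.2 (Set.range_subset_iff.2 fun i => ?_))
  simpa [hc] using Submodule.smul_mem _ c⁻¹ (Submodule.subset_span (hs i))

theorem AddSubgroup.eq_of_mem_ball {E : Type*} [SeminormedAddCommGroup E] (S : AddSubgroup E)
    {ε : ℝ} (hS : ∀ z ∈ S, ‖z‖ < ε → z = 0) {x y : E} (hx : x ∈ S) (hy : y ∈ S)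
    (hxy : y ∈ Metric.ball x ε) : y = x :=
  sub_eq_zero.1 (hS _ (S.sub_mem hy hx) (by rwa [← dist_eq_norm]))

theorem Complex.intCast_add_mul_I_eq_zero_of_norm_lt_one {m n : ℤ}
    (h : ‖(m + n * I : ℂ)‖ < 1) : (m + n * I : ℂ) = 0 := by
  have hm : |(m : ℝ)| < 1 := by simpa using (abs_re_le_norm _).trans_lt h
  have hn : |(n : ℝ)| < 1 := by simpa using (abs_im_le_norm _).trans_lt h
  simp [Int.abs_lt_one_iff.1 (by exact_mod_cast hm), Int.abs_lt_one_iff.1 (by exact_mod_cast hn)]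

theorem quat_smul_mulVec_vvec (r : ℝ) (a₀ a₁ a₂ a₃ : ℤ) :
    (2:ℂ) • ((a₀ • q1 + a₁ • qi + a₂ • qj + a₃ • qk) *ᵥ vvec r) =
      ![2 * r * (a₁ + (-a₂ : ℤ) * I), 2 * r * (a₀ + a₃ * I)] := by
  ext i
  fin_cases i <;> simp [q1, qi, qj, qk, vvec] <;> ring

theorem mem_Λset_iff {r : ℝ} {x : Fin 2 → ℂ} :
    x ∈ Λset r ↔ ∃ a₀ a₁ a₂ a₃ : ℤ, Even (a₀ + a₁ + a₂ + a₃) ∧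
      x = ![2 * r * (a₁ + (-a₂ : ℤ) * I), 2 * r * (a₀ + a₃ * I)] := by
  simp only [Λset, Set.mem_ofPred_eq, quat_smul_mulVec_vvec]

noncomputable def Λsubgroup (r : ℝ) : AddSubgroup (Fin 2 → ℂ) where
  carrier := Λset r
  zero_mem' := ⟨0, 0, 0, 0, Even.zero, by simp⟩
  add_mem' := by
    rintro _ _ ⟨a₀, a₁, a₂, a₃, ha, rfl⟩ ⟨b₀, b₁, b₂, b₃, hb, rfl⟩
    refine ⟨a₀ + b₀, a₁ + b₁, a₂ + b₂, a₃ + b₃, by grind, ?_⟩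
    simp only [add_smul, add_mulVec, smul_add]
    abel
  neg_mem' := by
    rintro _ ⟨a₀, a₁, a₂, a₃, ha, rfl⟩
    refine ⟨-a₀, -a₁, -a₂, -a₃, by grind, ?_⟩
    simp only [neg_smul, ← neg_add, neg_mulVec, smul_neg]

theorem eq_zero_of_mem_Λset_of_norm_lt {r : ℝ} (hr : 0 < r) {x : Fin 2 → ℂ} (hx : x ∈ Λset r)
    (hnorm : ‖x‖ < 2 * r) : x = 0 := by
  obtain ⟨a₀, a₁, a₂, a₃, -, rfl⟩ := mem_Λset_iff.1 hx
  have hcoord (m n : ℤ) (h : ‖(2 * r * (m + n * I) : ℂ)‖ < 2 * r) :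
      (2 * r * (m + n * I) : ℂ) = 0 := by
    rw [norm_mul, show ‖(2 * r : ℂ)‖ = 2 * r by norm_cast; simp [hr.le]] at h
    rw [intCast_add_mul_I_eq_zero_of_norm_lt_one ((mul_lt_iff_lt_one_right (by positivity)).1 h),
      mul_zero]
  ext i
  fin_cases i
  · exact hcoord _ _ ((norm_le_pi_norm _ 0).trans_lt hnorm)
  · exact hcoord _ _ ((norm_le_pi_norm _ 1).trans_lt hnorm)

theorem smul_piBasis_mem_Λset (r : ℝ) (i : Σ _ : Fin 2, Fin 2) :
    (4 * r) • Pi.basis (fun _ => Complex.basisOneI) i ∈ Λset r := by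
  rw [mem_Λset_iff]
  obtain ⟨i, j⟩ := i
  fin_cases i <;> fin_cases j
  · exact ⟨0, 2, 0, 0, by decide, by ext k; fin_cases k <;> simp [Complex.real_smul]; ring⟩
  · exact ⟨0, 0, -2, 0, by decide, by ext k; fin_cases k <;> simp [Complex.real_smul]; ring⟩
  · exact ⟨2, 0, 0, 0, by decide, by ext k; fin_cases k <;> simp [Complex.real_smul]; ring⟩
  · exact ⟨0, 0, 0, 2, by decide, by ext k; fin_cases k <;> simp [Complex.real_smul]; ring⟩

/-- For `r > 0`, the set `Λ` is a lattice in `ℂ²`: it is an additive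
subgroup, it is discrete (each point is isolated), and it spans `ℂ²` as a
real vector space. -/
theorem lambda_is_lattice (r : ℝ) (hr : 0 < r) :
    (∃ S : AddSubgroup (Fin 2 → ℂ), (S : Set (Fin 2 → ℂ)) = Λset r)
    ∧ (∀ x ∈ Λset r, ∃ U : Set (Fin 2 → ℂ), IsOpen U ∧ x ∈ U ∧
        ∀ y ∈ Λset r, y ∈ U → y = x)
    ∧ Submodule.span ℝ (Λset r) = ⊤ := by
  refine ⟨⟨Λsubgroup r, rfl⟩, fun x hx => ?_, ?_⟩
  · exact ⟨Metric.ball x (2 * r), Metric.isOpen_ball, Metric.mem_ball_self (by positivity),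
      fun y hy => (Λsubgroup r).eq_of_mem_ball
        (fun _ hz => eq_zero_of_mem_Λset_of_norm_lt hr hz) hx hy⟩
  · exact Submodule.span_eq_top_of_smul_basis_mem _ (by positivity) (smul_piBasis_mem_Λset r)
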